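/- Define the consistent Bellman operator on q : S × A → ℝ by (T_c q)(s,a) = r(s,a) + γ Σ_{s'} p(s'|s,a) · [ 1_{s' ≠ s} · max_{a'} q(s',a') + 1_{s' = s} · q(s,a) ]. Then T_c is a γ-contraction with respect to the supremum norm on bounded functions S × A → ℝ. -/

import Mathlib

/-- The consistent Bellman operator on state-action value functions of a finite MDP. -/
noncomputable def consistentBellman {S A : Type*} [Fintype S] [Fintype A] [DecidableEq S]
    (p : S → A → S → ℝ) (r : S → A → ℝ) (γ : ℝ) (q : S → A → ℝ) : S → A → ℝ :=
  fun s a => r s a + γ * ∑ s', p s a s' *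
    (if s' = s then q s a else ⨆ a' : A, q s' a')

/-! The contraction constant is `γ` because every target of the consistent operator, whether the
self-loop value `q s a` or a greedy value `⨆ a', q s' a'`, is `1`-Lipschitz in `q` for the sup norm,
and a probability average of `1`-Lipschitz quantities is again `1`-Lipschitz. -/

theorem ciSup_sub_ciSup_le {ι : Type*} [Nonempty ι] {f g : ι → ℝ} (hg : BddAbove (Set.range g))
    {c : ℝ} (h : ∀ i, f i - g i ≤ c) : (⨆ i, f i) - ⨆ i, g i ≤ c := by
  rw [sub_le_iff_le_add']
  exact ciSup_le fun i => (sub_le_iff_le_add'.mp (h i)).trans (add_le_add_left (le_ciSup hg i) c)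

theorem abs_ciSup_sub_ciSup_le {ι : Type*} [Nonempty ι] {f g : ι → ℝ}
    (hf : BddAbove (Set.range f)) (hg : BddAbove (Set.range g)) {c : ℝ}
    (h : ∀ i, |f i - g i| ≤ c) : |(⨆ i, f i) - ⨆ i, g i| ≤ c :=
  abs_sub_le_iff.mpr
    ⟨ciSup_sub_ciSup_le hg fun i => (abs_sub_le_iff.mp (h i)).1,
      ciSup_sub_ciSup_le hf fun i => (abs_sub_le_iff.mp (h i)).2⟩

theorem norm_sum_smul_le_of_sum_eq_one {ι E : Type*} [SeminormedAddCommGroup E] [NormedSpace ℝ E]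
    {s : Finset ι} {w : ι → ℝ} {x : ι → E} {c : ℝ} (hw₀ : ∀ i ∈ s, 0 ≤ w i)
    (hw₁ : ∑ i ∈ s, w i = 1) (hx : ∀ i ∈ s, ‖x i‖ ≤ c) : ‖∑ i ∈ s, w i • x i‖ ≤ c := by
  simpa using (convex_closedBall (0 : E) c).sum_mem hw₀ hw₁ fun i hi => by simpa using hx i hi

theorem abs_sub_apply_le_norm_sub {S A : Type*} [Fintype S] [Fintype A] (u v : S → A → ℝ)
    (s : S) (a : A) : |u s a - v s a| ≤ ‖u - v‖ :=
  (norm_le_pi_norm ((u - v) s) a).trans (norm_le_pi_norm (u - v) s)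

section ConsistentBellman

variable {S A : Type*} [Fintype S] [Fintype A] [DecidableEq S]

noncomputable def consistentTarget (q : S → A → ℝ) (s : S) (a : A) (s' : S) : ℝ :=
  if s' = s then q s a else ⨆ a' : A, q s' a'

theorem consistentBellman_apply (p : S → A → S → ℝ) (r : S → A → ℝ) (γ : ℝ) (q : S → A → ℝ)
    (s : S) (a : A) :
    consistentBellman p r γ q s a = r s a + γ * ∑ s', p s a s' * consistentTarget q s a s' :=
  rfl

theorem consistentBellman_sub_apply (p : S → A → S → ℝ) (r : S → A → ℝ) (γ : ℝ)
    (u v : S → A → ℝ) (s : S) (a : A) :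
    (consistentBellman p r γ u - consistentBellman p r γ v) s a =
      γ * ∑ s', p s a s' * (consistentTarget u s a s' - consistentTarget v s a s') := by
  simp only [Pi.sub_apply, consistentBellman_apply, mul_sub, Finset.sum_sub_distrib]
  ring

theorem abs_consistentTarget_sub_le [Nonempty A] (u v : S → A → ℝ) (s : S) (a : A) (s' : S) :
    |consistentTarget u s a s' - consistentTarget v s a s'| ≤ ‖u - v‖ := by
  unfold consistentTarget
  split_ifs
  · exact abs_sub_apply_le_norm_sub u v s a
  · exact abs_ciSup_sub_ciSup_le (Set.finite_range _).bddAbove (Set.finite_range _).bddAbove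
      fun a' => abs_sub_apply_le_norm_sub u v s' a'

end ConsistentBellman

theorem stmt_17_general {S A : Type*} [Fintype S] [Fintype A] [Nonempty A]
    [DecidableEq S]
    (p : S → A → S → ℝ) (hp0 : ∀ s a s', 0 ≤ p s a s')
    (hp1 : ∀ s a, ∑ s', p s a s' = 1)
    (r : S → A → ℝ) (γ : ℝ) (hγ0 : 0 ≤ γ) :
    ∀ u v : S → A → ℝ,
      ‖consistentBellman p r γ u - consistentBellman p r γ v‖ ≤ γ * ‖u - v‖ := by
  intro u v
  have hbound : 0 ≤ γ * ‖u - v‖ := by positivity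
  refine (pi_norm_le_iff_of_nonneg hbound).mpr fun s => ?_
  refine (pi_norm_le_iff_of_nonneg hbound).mpr fun a => ?_
  have hmix : |∑ s', p s a s' * (consistentTarget u s a s' - consistentTarget v s a s')| ≤
      ‖u - v‖ := by
    simpa only [Real.norm_eq_abs, smul_eq_mul] using norm_sum_smul_le_of_sum_eq_one
      (x := fun s' => consistentTarget u s a s' - consistentTarget v s a s')
      (fun s' _ => hp0 s a s') (hp1 s a)
      fun s' _ => abs_consistentTarget_sub_le u v s a s'
  rw [Real.norm_eq_abs, consistentBellman_sub_apply, abs_mul, abs_of_nonneg hγ0]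
  exact mul_le_mul_of_nonneg_left hmix hγ0

theorem stmt_17 {S A : Type*} [Fintype S] [Nonempty S] [Fintype A] [Nonempty A]
    [DecidableEq S]
    (p : S → A → S → ℝ) (hp0 : ∀ s a s', 0 ≤ p s a s')
    (hp1 : ∀ s a, ∑ s', p s a s' = 1)
    (r : S → A → ℝ) (γ : ℝ) (hγ0 : 0 ≤ γ) (hγ1 : γ < 1) :
    ∀ u v : S → A → ℝ,
      ‖consistentBellman p r γ u - consistentBellman p r γ v‖ ≤ γ * ‖u - v‖ :=
  stmt_17_general p hp0 hp1 r γ hγ0
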